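/- arXiv:2512.20301 — 3 statements merged into one kernel-verified Lean document; each statement's English description precedes it below -/
import Mathlib

section
/- Let Ω be an open proper subset of a metric space X and let d_Ω(z) denote the distance from z to the complement of Ω. If α is a rectifiable curve in Ω from u to v such that ℓ(α[u,w]) ≤ c·d_Ω(w) for all w ∈ α (with c ≥ 1), then for every x ∈ α one has d_Ω(x) ≥ max{(2·ℓ(α[u,x]) + d_Ω(u))/(4c), d_Ω(u)/(2c)}. -/
open Set Metric Real

/-- The distance from `z` to the complement of `Ω` (i.e. to `∂Ω` for `z ∈ Ω` open). -/
noncomputable def distCompl {X : Type*} [MetricSpace X] (Ω : Set X) (z : X) : ℝ :=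
  Metric.infDist z Ωᶜ

/-- An arclength-parametrized curve in `Ω` defined on `[0, L]`: it is 1-Lipschitz on
`[0, L]` (so the parameter measures arclength) and stays in `Ω`. -/
def IsArcCurve {X : Type*} [MetricSpace X] (Ω : Set X) (γ : ℝ → X) (L : ℝ) : Prop :=
  0 ≤ L ∧ (∀ s ∈ Set.Icc (0:ℝ) L, γ s ∈ Ω) ∧
    ∀ s ∈ Set.Icc (0:ℝ) L, ∀ t ∈ Set.Icc (0:ℝ) L, dist (γ s) (γ t) ≤ |s - t|

/-- The quasihyperbolic distance in `Ω`: the infimum over arclength-parametrized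
curves joining `x` and `y` in `Ω` of `∫ 1 / distCompl Ω`. -/
noncomputable def qhDist {X : Type*} [MetricSpace X] (Ω : Set X) (x y : X) : ℝ :=
  sInf {l : ℝ | ∃ γ : ℝ → X, ∃ L : ℝ, IsArcCurve Ω γ L ∧ γ 0 = x ∧ γ L = y ∧
    l = ∫ s in (0:ℝ)..L, 1 / distCompl Ω (γ s)}

/-- The inner (length) metric of `Ω`: infimum of lengths of curves in `Ω` joining
`x` and `y`. -/
noncomputable def innerDist {X : Type*} [MetricSpace X] (Ω : Set X) (x y : X) : ℝ :=
  sInf {l : ℝ | ∃ γ : ℝ → X, ∃ L : ℝ, IsArcCurve Ω γ L ∧ γ 0 = x ∧ γ L = y ∧ l = L}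

/-- A quasihyperbolic geodesic: an arclength curve each of whose subarcs realizes
the quasihyperbolic distance between its endpoints. -/
def IsQHGeodesic {X : Type*} [MetricSpace X] (Ω : Set X) (γ : ℝ → X) (L : ℝ) : Prop :=
  IsArcCurve Ω γ L ∧ ∀ s ∈ Set.Icc (0:ℝ) L, ∀ t ∈ Set.Icc (0:ℝ) L, s ≤ t →
    (∫ u in s..t, 1 / distCompl Ω (γ u)) = qhDist Ω (γ s) (γ t)

/-- A length space: any two points are joined by curves of length arbitrarily close
to their distance. -/
def IsLengthSpace (X : Type*) [MetricSpace X] : Prop :=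
  ∀ x y : X, ∀ ε : ℝ, 0 < ε → ∃ β : ℝ → X, ∃ M : ℝ, 0 ≤ M ∧ β 0 = x ∧ β M = y ∧
    (∀ s ∈ Set.Icc (0:ℝ) M, ∀ t ∈ Set.Icc (0:ℝ) M, dist (β s) (β t) ≤ |s - t|) ∧
    M ≤ dist x y + ε

/-- If `α` is a cone curve at its initial point `u = α 0` with constant `c ≥ 1`
(i.e. `ℓ(α[u,w]) ≤ c·d_Ω(w)` along `α`), then
`d_Ω(x) ≥ max{(2ℓ(α[u,x]) + d_Ω(u))/(4c), d_Ω(u)/(2c)}` for every `x` on `α`. -/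
theorem stmt2 {X : Type*} [MetricSpace X] (Ω : Set X) (hΩ : IsOpen Ω)
    (hprop : Ω ≠ Set.univ) (c : ℝ) (hc : 1 ≤ c) (α : ℝ → X) (L : ℝ)
    (hα : IsArcCurve Ω α L)
    (hcone : ∀ s ∈ Set.Icc (0:ℝ) L, s ≤ c * distCompl Ω (α s)) :
    ∀ s ∈ Set.Icc (0:ℝ) L,
      max ((2 * s + distCompl Ω (α 0)) / (4 * c)) (distCompl Ω (α 0) / (2 * c)) ≤
        distCompl Ω (α s) := by
  intro s hs
  have hc0 : (0:ℝ) < c := lt_of_lt_of_le one_pos hc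
  have hL := hα.1
  have hlip := hα.2.2
  set d0 := distCompl Ω (α 0) with hd0def
  set ds := distCompl Ω (α s) with hdsdef
  have h0mem : (0:ℝ) ∈ Set.Icc (0:ℝ) L := ⟨le_refl 0, hL⟩
  have hdist : dist (α 0) (α s) ≤ s := by
    have := hlip 0 h0mem s hs
    rwa [abs_of_nonpos (by linarith [hs.1]), neg_sub, sub_zero] at this
  have hlip' : d0 ≤ ds + s := by
    have h := Metric.infDist_le_infDist_add_dist (x := α 0) (y := α s) (s := Ωᶜ)
    simp only [hd0def, hdsdef, distCompl] at *
    linarith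
  have hcone' : s ≤ c * ds := hcone s hs
  have hd0nn : 0 ≤ d0 := Metric.infDist_nonneg
  have hsnn : 0 ≤ s := hs.1
  have hdsnn : 0 ≤ ds := Metric.infDist_nonneg
  rw [max_le_iff, div_le_iff₀ (by linarith), div_le_iff₀ (by linarith)]
  rcases le_or_gt (d0 / 2) s with h | h
  · constructor <;> nlinarith
  · constructor <;> nlinarith
end

section
/- Let Ω be an open proper subset of a metric space, let u ∈ Ω, c ≥ 1, and let α be a rectifiable curve in Ω starting at u such that every point w ∈ α satisfies ℓ(α[u,w]) ≤ c·d_Ω(w). Then for every w ∈ α, the quasihyperbolic distance satisfies k_Ω(u, w) ≤ 4c·log(1 + ℓ(α[u,w])/d_Ω(u)). -/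
open Set Metric Real

/-- Lemma 2.1: if `α` is a cone curve at `u = α 0` with constant `c ≥ 1`, then for
every `w = α s` on `α`, `k_Ω(u,w) ≤ 4c·log(1 + ℓ(α[u,w])/d_Ω(u))`. -/
theorem stmt11 {X : Type*} [MetricSpace X] (Ω : Set X) (hΩ : IsOpen Ω)
    (hprop : Ω ≠ Set.univ) (c : ℝ) (hc : 1 ≤ c) (α : ℝ → X) (L : ℝ)
    (hα : IsArcCurve Ω α L)
    (hcone : ∀ s ∈ Set.Icc (0:ℝ) L, s ≤ c * distCompl Ω (α s)) :
    ∀ s ∈ Set.Icc (0:ℝ) L,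
      qhDist Ω (α 0) (α s) ≤ 4 * c * Real.log (1 + s / distCompl Ω (α 0)) := by

  classical
  obtain ⟨hL, hmem, hlip⟩ := hα
  intro s hs
  have hcpos : (0:ℝ) < c := lt_of_lt_of_le one_pos hc
  set d := distCompl Ω (α 0) with hd_def
  have hΩc : Ωᶜ.Nonempty := by
    rw [Set.nonempty_compl]; exact hprop
  have hd : 0 < d :=
    (hΩ.isClosed_compl.notMem_iff_infDist_pos hΩc).mp
      (by simpa using hmem 0 ⟨le_refl _, hL⟩)
  -- key pointwise bound
  have key : ∀ t ∈ Set.Icc (0:ℝ) s, (2*t + d)/(4*c) ≤ distCompl Ω (α t) := by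
    intro t ht
    have htL : t ∈ Set.Icc (0:ℝ) L := ⟨ht.1, ht.2.trans hs.2⟩
    have h1 : t ≤ c * distCompl Ω (α t) := hcone t htL
    have h2 : d ≤ distCompl Ω (α t) + t := by
      have := Metric.infDist_le_infDist_add_dist (x := α 0) (y := α t) (s := Ωᶜ)
      have hdist : dist (α 0) (α t) ≤ t := by
        calc dist (α 0) (α t) ≤ |0 - t| := hlip 0 ⟨le_refl _, hL⟩ t htL
          _ = t := by rw [zero_sub, abs_neg, abs_of_nonneg ht.1]
      simp only [distCompl, hd_def] at *
      linarith
    have hD0 : 0 ≤ distCompl Ω (α t) := Metric.infDist_nonneg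
    rw [div_le_iff₀ (by positivity)]
    rcases le_or_gt (d/2) t with hcase | hcase
    · nlinarith
    · nlinarith
  have hDpos : ∀ t ∈ Set.Icc (0:ℝ) s, 0 < distCompl Ω (α t) := by
    intro t ht
    exact lt_of_lt_of_le (div_pos (by linarith [ht.1]) (by positivity)) (key t ht)
  -- continuity of the integrand on [0,s]
  have hαcont : ContinuousOn α (Set.Icc 0 s) := by
    have : LipschitzOnWith 1 α (Set.Icc 0 L) := by
      rw [lipschitzOnWith_iff_dist_le_mul]
      intro x hx y hy
      simpa [abs_sub_comm, Real.dist_eq] using hlip x hx y hy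
    exact (this.continuousOn).mono (Set.Icc_subset_Icc le_rfl hs.2)
  have hDcont : ContinuousOn (fun t => distCompl Ω (α t)) (Set.Icc 0 s) := by
    exact Metric.continuous_infDist_pt Ωᶜ |>.comp_continuousOn hαcont
  have hfcont : ContinuousOn (fun t => 1 / distCompl Ω (α t)) (Set.Icc 0 s) := by
    exact ContinuousOn.div continuousOn_const hDcont (fun t ht => (hDpos t ht).ne')
  have hgcont : ContinuousOn (fun t : ℝ => 4*c / (2*t + d)) (Set.Icc 0 s) := by
    refine ContinuousOn.div continuousOn_const (by fun_prop) (fun t ht => ?_)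
    have h0 := ht.1
    exact ne_of_gt (by linarith)
  have hfint : IntervalIntegrable (fun t => 1 / distCompl Ω (α t))
      MeasureTheory.volume 0 s := by
    have h : ContinuousOn (fun t => 1 / distCompl Ω (α t)) (Set.uIcc 0 s) := by
      rwa [Set.uIcc_of_le hs.1]
    exact h.intervalIntegrable
  have hgint : IntervalIntegrable (fun t : ℝ => 4*c / (2*t + d))
      MeasureTheory.volume 0 s := by
    have h : ContinuousOn (fun t : ℝ => 4*c / (2*t + d)) (Set.uIcc 0 s) := by
      rwa [Set.uIcc_of_le hs.1]
    exact h.intervalIntegrable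
  -- qhDist ≤ integral along α
  have hmem_set : (∫ t in (0:ℝ)..s, 1 / distCompl Ω (α t)) ∈
      {l : ℝ | ∃ γ : ℝ → X, ∃ L' : ℝ, IsArcCurve Ω γ L' ∧ γ 0 = α 0 ∧ γ L' = α s ∧
        l = ∫ u in (0:ℝ)..L', 1 / distCompl Ω (γ u)} := by
    refine ⟨α, s, ⟨hs.1, ?_, ?_⟩, rfl, rfl, rfl⟩
    · exact fun t ht => hmem t ⟨ht.1, ht.2.trans hs.2⟩
    · exact fun x hx y hy => hlip x ⟨hx.1, hx.2.trans hs.2⟩ y ⟨hy.1, hy.2.trans hs.2⟩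
  have hbdd : BddBelow {l : ℝ | ∃ γ : ℝ → X, ∃ L' : ℝ, IsArcCurve Ω γ L' ∧ γ 0 = α 0 ∧
      γ L' = α s ∧ l = ∫ u in (0:ℝ)..L', 1 / distCompl Ω (γ u)} := by
    refine ⟨0, fun l hl => ?_⟩
    obtain ⟨γ, L', hγ, -, -, rfl⟩ := hl
    refine intervalIntegral.integral_nonneg hγ.1 (fun u hu => ?_)
    have : (0:ℝ) ≤ distCompl Ω (γ u) := Metric.infDist_nonneg
    positivity
  have step1 : qhDist Ω (α 0) (α s) ≤ ∫ t in (0:ℝ)..s, 1 / distCompl Ω (α t) :=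
    csInf_le hbdd hmem_set
  -- compare integrands
  have step2 : (∫ t in (0:ℝ)..s, 1 / distCompl Ω (α t)) ≤
      ∫ t in (0:ℝ)..s, 4*c / (2*t + d) := by
    refine intervalIntegral.integral_mono_on hs.1 hfint hgint (fun t ht => ?_)
    have hk := key t ht
    have hquot : (0:ℝ) < (2*t + d)/(4*c) :=
      div_pos (by linarith [ht.1]) (by positivity)
    have := one_div_le_one_div_of_le hquot hk
    rwa [one_div_div] at this
  -- compute the integral
  have step3 : (∫ t in (0:ℝ)..s, 4*c / (2*t + d)) = 2*c * Real.log ((2*s + d)/d) := by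
    have h1 : (∫ t in (0:ℝ)..s, 4*c / (2*t + d))
        = 4*c * ∫ t in (0:ℝ)..s, (2*t + d)⁻¹ := by
      simp_rw [div_eq_mul_inv]
      rw [intervalIntegral.integral_const_mul]
    have h2 : (∫ t in (0:ℝ)..s, (2*t + d)⁻¹)
        = (2:ℝ)⁻¹ * ∫ x in (2*0 + d)..(2*s + d), x⁻¹ := by
      have := intervalIntegral.integral_comp_mul_add (a := (0:ℝ)) (b := s)
        (f := fun x : ℝ => x⁻¹) (c := 2) two_ne_zero d
      simpa [smul_eq_mul] using this
    have h3 : (∫ x in (2*0 + d)..(2*s + d), (x:ℝ)⁻¹) = Real.log ((2*s + d)/d) := by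
      rw [show 2*0 + d = d by ring, integral_inv_of_pos hd (by linarith [hs.1])]
    rw [h1, h2, h3]; ring
  -- final comparison
  have step4 : 2*c * Real.log ((2*s + d)/d) ≤ 4 * c * Real.log (1 + s / d) := by
    have hsd : (0:ℝ) < (2*s + d)/d := by
      apply div_pos (by nlinarith [hs.1]) hd
    have hle : (2*s + d)/d ≤ (1 + s/d)^2 := by
      rw [div_le_iff₀ hd] at *
      have : (1 + s/d)^2 * d = (d + s)^2 / d := by field_simp
      rw [this, le_div_iff₀ hd]
      nlinarith [hs.1]
    have hlog : Real.log ((2*s + d)/d) ≤ Real.log ((1 + s/d)^2) :=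
      Real.log_le_log hsd hle
    rw [Real.log_pow] at hlog
    push_cast at hlog
    nlinarith [hlog]
  calc qhDist Ω (α 0) (α s) ≤ ∫ t in (0:ℝ)..s, 1 / distCompl Ω (α t) := step1
    _ ≤ ∫ t in (0:ℝ)..s, 4*c / (2*t + d) := step2
    _ = 2*c * Real.log ((2*s + d)/d) := step3
    _ ≤ 4 * c * Real.log (1 + s / d) := step4
end

section
/- Let Ω be an open proper subset of a length space with quasihyperbolic distance k_Ω, and let x₁, x₂ ∈ Ω with k_Ω(x₁, x₂) ≥ 1. Then d(x₁, x₂) ≥ (9/19)·max{d_Ω(x₁), d_Ω(x₂)}. -/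
open Set Metric Real

/-!
A curve from `x` of length `M` stays at distance at least `d_Ω(x) - M` from `∂Ω`, so a
near-geodesic of the length space from `x` to `y` with `M < d_Ω(x)` gives
`k_Ω(x, y) ≤ M / (d_Ω(x) - M)`. If `d(x, y) < (9/19) d_Ω(x)`, taking `M = (9/19) d_Ω(x)` yields
`k_Ω(x, y) ≤ 9/10 < 1`.
-/

section

variable {X : Type*} [MetricSpace X] {Ω : Set X}

lemma IsArcCurve.comp_sub_left {γ : ℝ → X} {L : ℝ} (hγ : IsArcCurve Ω γ L) :
    IsArcCurve Ω (fun s => γ (L - s)) L := by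
  obtain ⟨hL, hmem, hlip⟩ := hγ
  have hrefl : ∀ s ∈ Icc (0 : ℝ) L, L - s ∈ Icc (0 : ℝ) L :=
    fun s hs => ⟨by linarith [hs.2], by linarith [hs.1]⟩
  refine ⟨hL, fun s hs => hmem _ (hrefl s hs), fun s hs t ht => ?_⟩
  calc dist (γ (L - s)) (γ (L - t)) ≤ |(L - s) - (L - t)| := hlip _ (hrefl s hs) _ (hrefl t ht)
    _ = |s - t| := by rw [sub_sub_sub_cancel_left, abs_sub_comm]

lemma qhDist_comm (x y : X) : qhDist Ω x y = qhDist Ω y x := by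
  unfold qhDist
  congr 1
  ext l
  constructor <;>
  · rintro ⟨γ, L, hγ, h0, hL, rfl⟩
    refine ⟨fun s => γ (L - s), L, hγ.comp_sub_left, by simpa, by simpa, ?_⟩
    have := intervalIntegral.integral_comp_sub_left (fun u => 1 / distCompl Ω (γ u)) L (a := 0)
      (b := L)
    simp only [sub_zero, sub_self] at this
    exact this.symm

lemma qhDist_le_integral {γ : ℝ → X} {L : ℝ} (hγ : IsArcCurve Ω γ L) :
    qhDist Ω (γ 0) (γ L) ≤ ∫ s in (0 : ℝ)..L, 1 / distCompl Ω (γ s) := by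
  refine csInf_le ⟨0, ?_⟩ ⟨γ, L, hγ, rfl, rfl, rfl⟩
  rintro l ⟨γ', L', ⟨hL', -, -⟩, -, -, rfl⟩
  exact intervalIntegral.integral_nonneg hL' fun _ _ => one_div_nonneg.mpr infDist_nonneg

lemma qhDist_le_of_dist_lt (hX : IsLengthSpace X) {x y : X} {M : ℝ} (hxy : dist x y < M)
    (hM : M < distCompl Ω x) : qhDist Ω x y ≤ M / (distCompl Ω x - M) := by
  set d := distCompl Ω x
  obtain ⟨β, M', hM'0, rfl, rfl, hlip, hM'⟩ := hX x y (M - dist x y) (by linarith)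
  have hfar : ∀ s ∈ Icc (0 : ℝ) M', d - M ≤ distCompl Ω (β s) := fun s hs => by
    have hβs : dist (β 0) (β s) ≤ s := by
      simpa [abs_of_nonneg hs.1] using hlip 0 ⟨le_rfl, hM'0⟩ s hs
    have : d ≤ distCompl Ω (β s) + dist (β 0) (β s) := infDist_le_infDist_add_dist
    linarith [hs.2]
  have hβ : IsArcCurve Ω β M' := by
    refine ⟨hM'0, fun s hs => ?_, hlip⟩
    by_contra hout
    have : distCompl Ω (β s) = 0 := infDist_zero_of_mem hout
    linarith [hfar s hs]
  have hbound : ∀ s ∈ uIoc 0 M', ‖1 / distCompl Ω (β s)‖ ≤ 1 / (d - M) := fun s hs => by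
    have hs' : s ∈ Icc (0 : ℝ) M' := by
      rw [uIoc_of_le hM'0] at hs
      exact Ioc_subset_Icc_self hs
    have hpos : 0 < d - M := by linarith
    have : 0 < distCompl Ω (β s) := by linarith [hfar s hs']
    rw [Real.norm_of_nonneg (by positivity)]
    exact one_div_le_one_div_of_le hpos (hfar s hs')
  calc qhDist Ω (β 0) (β M') ≤ ∫ s in (0 : ℝ)..M', 1 / distCompl Ω (β s) := qhDist_le_integral hβ
    _ ≤ ‖∫ s in (0 : ℝ)..M', 1 / distCompl Ω (β s)‖ := le_norm_self _
    _ ≤ 1 / (d - M) * |M' - 0| := intervalIntegral.norm_integral_le_of_norm_le_const hbound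
    _ ≤ M / (d - M) := by
      rw [sub_zero, abs_of_nonneg hM'0, one_div_mul_eq_div]
      gcongr
      linarith

lemma nine_div_nineteen_mul_distCompl_le_dist (hX : IsLengthSpace X) {x y : X}
    (hk : 1 ≤ qhDist Ω x y) : 9 / 19 * distCompl Ω x ≤ dist x y := by
  by_contra! hlt
  have hd : 0 < distCompl Ω x := by linarith [dist_nonneg (x := x) (y := y)]
  have := qhDist_le_of_dist_lt (Ω := Ω) hX hlt (by linarith)
  rw [show distCompl Ω x - 9 / 19 * distCompl Ω x = 10 / 19 * distCompl Ω x by ring,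
    mul_div_mul_right _ _ hd.ne'] at this
  linarith

end

theorem stmt12_general {X : Type*} [MetricSpace X] (hX : IsLengthSpace X) (Ω : Set X)
    (x₁ x₂ : X)
    (hk : 1 ≤ qhDist Ω x₁ x₂) :
    9 / 19 * max (distCompl Ω x₁) (distCompl Ω x₂) ≤ dist x₁ x₂ := by
  rw [mul_max_of_nonneg _ _ (by norm_num)]
  refine max_le (nine_div_nineteen_mul_distCompl_le_dist hX hk) ?_
  rw [dist_comm]
  exact nine_div_nineteen_mul_distCompl_le_dist hX (qhDist_comm (Ω := Ω) x₁ x₂ ▸ hk)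

/-- If `k_Ω(x₁,x₂) ≥ 1` in a length space, then
`d(x₁,x₂) ≥ (9/19)·max{d_Ω(x₁), d_Ω(x₂)}`. -/
theorem stmt12 {X : Type*} [MetricSpace X] (hX : IsLengthSpace X) (Ω : Set X)
    (hΩ : IsOpen Ω) (hprop : Ω ≠ Set.univ) (x₁ x₂ : X) (hx₁ : x₁ ∈ Ω) (hx₂ : x₂ ∈ Ω)
    (hk : 1 ≤ qhDist Ω x₁ x₂) :
    9 / 19 * max (distCompl Ω x₁) (distCompl Ω x₂) ≤ dist x₁ x₂ :=
  stmt12_general hX Ω x₁ x₂ hk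
end
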